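/- Let Z be a Banach space, I a directed set, and {Z_i : i ∈ I} an increasing family (Z_i ⊆ Z_j when i ≤ j) of closed subspaces each of which is the range of a norm-one linear projection on Z, such that the union ⋃_{i∈I} Z_i is dense in Z. Then n(Z) ≥ limsup_{i ∈ I} n(Z_i). -/
import Mathlib


open scoped ENNReal

noncomputable def vrad {X : Type*} [NormedAddCommGroup X] [NormedSpace ℝ X] (T : X →L[ℝ] X) : ℝ :=
  sSup {r : ℝ | ∃ x : X, ∃ f : X →L[ℝ] ℝ, ‖x‖ = 1 ∧ ‖f‖ = 1 ∧ f x = 1 ∧ r = |f (T x)|}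

noncomputable def nindex (X : Type*) [NormedAddCommGroup X] [NormedSpace ℝ X] : ℝ :=
  sInf {r : ℝ | ∃ T : X →L[ℝ] X, ‖T‖ = 1 ∧ r = vrad T}

section helpers

variable {X : Type*} [NormedAddCommGroup X] [NormedSpace ℝ X]

lemma vrad_set_bddAbove (T : X →L[ℝ] X) :
    BddAbove {r : ℝ | ∃ x : X, ∃ f : X →L[ℝ] ℝ, ‖x‖ = 1 ∧ ‖f‖ = 1 ∧ f x = 1 ∧ r = |f (T x)|} := by
  refine ⟨‖T‖, fun r hr => ?_⟩
  obtain ⟨x, f, hx, hf, _, hr⟩ := hr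
  calc r = |f (T x)| := hr
    _ ≤ ‖f‖ * ‖T x‖ := f.le_opNorm (T x)
    _ ≤ ‖f‖ * (‖T‖ * ‖x‖) := mul_le_mul_of_nonneg_left (T.le_opNorm x) (norm_nonneg f)
    _ = ‖T‖ := by rw [hx, hf]; ring

lemma vrad_nonneg (T : X →L[ℝ] X) : 0 ≤ vrad T :=
  Real.sSup_nonneg (fun r hr => by obtain ⟨x, f, _, _, _, hr⟩ := hr; rw [hr]; exact abs_nonneg _)

lemma vrad_le_norm (T : X →L[ℝ] X) : vrad T ≤ ‖T‖ := by
  apply Real.sSup_le _ (norm_nonneg T)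
  rintro r ⟨x, f, hx, hf, _, rfl⟩
  calc |f (T x)| ≤ ‖f‖ * ‖T x‖ := f.le_opNorm (T x)
    _ ≤ ‖f‖ * (‖T‖ * ‖x‖) := mul_le_mul_of_nonneg_left (T.le_opNorm x) (norm_nonneg f)
    _ = ‖T‖ := by rw [hx, hf]; ring

lemma le_vrad (T : X →L[ℝ] X) {x : X} {f : X →L[ℝ] ℝ} (hx : ‖x‖ = 1) (hf : ‖f‖ = 1)
    (hfx : f x = 1) : |f (T x)| ≤ vrad T :=
  le_csSup (vrad_set_bddAbove T) ⟨x, f, hx, hf, hfx, rfl⟩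

lemma nindex_nonneg (X : Type*) [NormedAddCommGroup X] [NormedSpace ℝ X] : 0 ≤ nindex X :=
  Real.sInf_nonneg (fun r hr => by obtain ⟨T, _, rfl⟩ := hr; exact vrad_nonneg T)

lemma nindex_set_bddBelow (X : Type*) [NormedAddCommGroup X] [NormedSpace ℝ X] :
    BddBelow {r : ℝ | ∃ T : X →L[ℝ] X, ‖T‖ = 1 ∧ r = vrad T} :=
  ⟨0, fun r hr => by obtain ⟨T, _, rfl⟩ := hr; exact vrad_nonneg T⟩

lemma nindex_of_subsingleton (X : Type*) [NormedAddCommGroup X] [NormedSpace ℝ X]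
    [Subsingleton X] : nindex X = 0 := by
  have : {r : ℝ | ∃ T : X →L[ℝ] X, ‖T‖ = 1 ∧ r = vrad T} = ∅ := by
    ext r
    simp only [Set.mem_setOf_eq, Set.mem_empty_iff_false, iff_false, not_exists]
    rintro T ⟨hT, -⟩
    have : T = 0 := Subsingleton.elim _ _
    rw [this, norm_zero] at hT
    norm_num at hT
  rw [nindex, this, Real.sInf_empty]

lemma nindex_le_inv_norm_mul_vrad (T : X →L[ℝ] X) (h : 0 < ‖T‖) :
    nindex X ≤ ‖T‖⁻¹ * vrad T := by
  have hn : ‖(‖T‖⁻¹ • T)‖ = 1 := by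
    have hle : ‖(‖T‖⁻¹ • T)‖ ≤ 1 := by
      have h1 := ContinuousLinearMap.opNorm_smul_le (‖T‖⁻¹) T
      rwa [Real.norm_eq_abs, abs_of_pos (inv_pos.mpr h), inv_mul_cancel₀ h.ne'] at h1
    have hge : 1 ≤ ‖(‖T‖⁻¹ • T)‖ := by
      have h2 : T = ‖T‖ • (‖T‖⁻¹ • T) := by
        rw [smul_smul, mul_inv_cancel₀ h.ne', one_smul]
      have h3 : ‖T‖ ≤ ‖T‖ * ‖(‖T‖⁻¹ • T)‖ := by
        calc ‖T‖ = ‖(‖T‖ • (‖T‖⁻¹ • T))‖ := by rw [← h2]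
          _ ≤ ‖(‖T‖ : ℝ)‖ * ‖(‖T‖⁻¹ • T)‖ := ContinuousLinearMap.opNorm_smul_le _ _
          _ = ‖T‖ * ‖(‖T‖⁻¹ • T)‖ := by rw [Real.norm_eq_abs, abs_of_pos h]
      nlinarith
    exact le_antisymm hle hge
  have h2 : vrad (‖T‖⁻¹ • T) ≤ ‖T‖⁻¹ * vrad T := by
    apply Real.sSup_le
    · rintro r ⟨x, f, hx, hf, hfx, rfl⟩
      have hfs : f ((‖T‖⁻¹ • T) x) = ‖T‖⁻¹ * f (T x) := by
        simp [ContinuousLinearMap.smul_apply, map_smul, smul_eq_mul]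
      rw [hfs, abs_mul, abs_of_pos (inv_pos.mpr h)]
      exact mul_le_mul_of_nonneg_left (le_vrad T hx hf hfx) (inv_nonneg.mpr h.le)
    · exact mul_nonneg (inv_nonneg.mpr h.le) (vrad_nonneg T)
  exact (csInf_le (nindex_set_bddBelow X) ⟨_, hn, rfl⟩).trans h2

lemma vrad_smul_le_helper : True := trivial

end helpers

set_option maxHeartbeats 1000000 in
set_option synthInstance.maxHeartbeats 400000 in
/-- If a Banach space `Z` contains an increasing family of one-complemented
closed subspaces, indexed by a directed set, whose union is dense, then
`n(Z) ≥ limsup_i n(Z_i)`. -/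
theorem limsup_nindex_le_of_dense_union {Z : Type*} [NormedAddCommGroup Z] [NormedSpace ℝ Z]
    [CompleteSpace Z] {I : Type*} [Nonempty I] [Preorder I] [IsDirected I (· ≤ ·)]
    (Zl : I → Submodule ℝ Z) (hmono : Monotone Zl)
    (hclosed : ∀ i, IsClosed (Zl i : Set Z))
    (hproj : ∀ i, ∃ P : Z →L[ℝ] Z, (∀ z, P (P z) = P z) ∧ ‖P‖ = 1 ∧
      Set.range P = (Zl i : Set Z))
    (hdense : Dense (⋃ i, (Zl i : Set Z))) :
    Filter.limsup (fun i => nindex ↥(Zl i)) Filter.atTop ≤ nindex Z := by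
  haveI : (Filter.atTop : Filter I).NeBot := Filter.atTop_neBot_iff.mpr ⟨‹_›, ‹_›⟩
  by_cases hZ : Nontrivial Z
  swap
  · haveI : Subsingleton Z := not_nontrivial_iff_subsingleton.mp hZ
    have h0 : ∀ i, nindex ↥(Zl i) = 0 := fun i => nindex_of_subsingleton _
    simp only [h0]
    rw [Filter.limsup_const]
    exact nindex_nonneg Z
  · have hne : {r : ℝ | ∃ T : Z →L[ℝ] Z, ‖T‖ = 1 ∧ r = vrad T}.Nonempty :=
      ⟨vrad (ContinuousLinearMap.id ℝ Z),
        ContinuousLinearMap.id ℝ Z, ContinuousLinearMap.norm_id, rfl⟩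
    rw [nindex]
    apply le_csInf hne
    rintro r ⟨T, hT, rfl⟩
    have hvT0 := vrad_nonneg T
    have hvT1 : vrad T ≤ 1 := by simpa [hT] using vrad_le_norm T
    have hcb : Filter.IsCoboundedUnder (· ≤ ·) Filter.atTop (fun i => nindex ↥(Zl i)) :=
      Filter.isCoboundedUnder_le_of_le Filter.atTop (fun i => nindex_nonneg _)
    refine le_of_forall_pos_le_add ?_
    intro η hη
    set ε := min (η / 10) (1 / 8) with hεdef
    have hε0 : 0 < ε := lt_min (by linarith) (by norm_num)
    have hε8 : ε ≤ 1 / 8 := min_le_right _ _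
    have hεη : ε ≤ η / 10 := min_le_left _ _
    have h14 : (0:ℝ) < 1 - 4 * ε := by linarith
    -- eventual bound
    have hev : ∀ᶠ k in (Filter.atTop : Filter I),
        nindex ↥(Zl k) ≤ ((1 + ε) / (1 - 4 * ε)) * vrad T := by
      obtain ⟨x0, hx0, hTx0⟩ :=
        T.exists_lt_apply_of_lt_opNorm (show 1 - ε < ‖T‖ by rw [hT]; linarith)
      obtain ⟨y, hyU, hyd⟩ := Metric.mem_closure_iff.mp (hdense x0) ε hε0
      obtain ⟨i, hyi⟩ : ∃ i, y ∈ Zl i := by simpa using hyU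
      obtain ⟨z, hzU, hzd⟩ := Metric.mem_closure_iff.mp (hdense (T x0)) ε hε0
      obtain ⟨j, hzj⟩ : ∃ j, z ∈ Zl j := by simpa using hzU
      obtain ⟨k0, hk0i, hk0j⟩ := directed_of (· ≤ ·) i j
      rw [Filter.eventually_atTop]
      refine ⟨k0, fun k hk => ?_⟩
      have hyk : y ∈ Zl k := hmono (hk0i.trans hk) hyi
      have hzk : z ∈ Zl k := hmono (hk0j.trans hk) hzj
      obtain ⟨P, hPidem, hPnorm, hPrange⟩ := hproj k
      have hPmem : ∀ w : Z, P w ∈ Zl k := fun w => by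
        have : P w ∈ Set.range P := Set.mem_range_self w
        rwa [hPrange] at this
      have hPfix : ∀ w ∈ Zl k, P w = w := by
        intro w hw
        have hw' : w ∈ Set.range P := by rw [hPrange]; exact hw
        obtain ⟨u, hu⟩ := hw'
        rw [← hu, hPidem]
      have hPle : ∀ w, ‖P w‖ ≤ ‖w‖ := fun w => by
        calc ‖P w‖ ≤ ‖P‖ * ‖w‖ := P.le_opNorm w
          _ = ‖w‖ := by rw [hPnorm, one_mul]
      set Pk : Z →L[ℝ] ↥(Zl k) := P.codRestrict (Zl k) hPmem with hPkdef
      set Tk : ↥(Zl k) →L[ℝ] ↥(Zl k) := Pk.comp (T.comp (Zl k).subtypeL) with hTkdef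
      have hTk_apply : ∀ v : ↥(Zl k), (Tk v : Z) = P (T (v : Z)) := fun v => rfl
      have hTk_norm : ∀ v : ↥(Zl k), ‖Tk v‖ = ‖P (T (v : Z))‖ := fun v => by
        rw [← hTk_apply v]; rfl
      have hTk_le : ‖Tk‖ ≤ 1 := by
        refine Tk.opNorm_le_bound zero_le_one (fun v => ?_)
        rw [one_mul, hTk_norm]
        calc ‖P (T (v : Z))‖ ≤ ‖T (v : Z)‖ := hPle _
          _ ≤ ‖T‖ * ‖(v : Z)‖ := T.le_opNorm _
          _ = ‖v‖ := by rw [hT, one_mul, Submodule.coe_norm]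
      set yk : ↥(Zl k) := ⟨y, hyk⟩ with hykdef
      have hyd' : ‖x0 - y‖ < ε := by rwa [← dist_eq_norm]
      have hzd' : ‖T x0 - z‖ < ε := by rwa [← dist_eq_norm]
      have hyn : ‖yk‖ ≤ 1 + ε := by
        have h1 : ‖y‖ - ‖x0‖ ≤ ‖y - x0‖ := norm_sub_norm_le y x0
        have h2 : ‖y - x0‖ = ‖x0 - y‖ := norm_sub_rev y x0
        have h3 : ‖yk‖ = ‖y‖ := Submodule.coe_norm yk
        rw [h3]
        linarith [hx0.le, hyd'.le]
      have hPTy : 1 - 4 * ε ≤ ‖P (T y)‖ := by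
        have h1 : ‖T y - T x0‖ ≤ ε := by
          calc ‖T y - T x0‖ = ‖T (y - x0)‖ := by rw [map_sub]
            _ ≤ ‖T‖ * ‖y - x0‖ := T.le_opNorm _
            _ = ‖x0 - y‖ := by rw [hT, one_mul, norm_sub_rev]
            _ ≤ ε := hyd'.le
        have h2 : ‖P (T y) - P (T x0)‖ ≤ ε := by
          calc ‖P (T y) - P (T x0)‖ = ‖P (T y - T x0)‖ := by rw [map_sub]
            _ ≤ ‖T y - T x0‖ := hPle _
            _ ≤ ε := h1
        have h3 : ‖P (T x0) - T x0‖ ≤ 2 * ε := by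
          have hPz : P z = z := hPfix z hzk
          have hfirst : ‖P (T x0) - P z‖ ≤ ε := by
            calc ‖P (T x0) - P z‖ = ‖P (T x0 - z)‖ := by rw [map_sub]
              _ ≤ ‖T x0 - z‖ := hPle _
              _ ≤ ε := hzd'.le
          have hsecond : ‖P z - T x0‖ ≤ ε := by
            rw [hPz, norm_sub_rev]
            exact hzd'.le
          calc ‖P (T x0) - T x0‖ ≤ ‖P (T x0) - P z‖ + ‖P z - T x0‖ :=
                norm_sub_le_norm_sub_add_norm_sub _ _ _
            _ ≤ 2 * ε := by linarith
        have h4 : ‖P (T y) - T x0‖ ≤ 3 * ε := by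
          calc ‖P (T y) - T x0‖ ≤ ‖P (T y) - P (T x0)‖ + ‖P (T x0) - T x0‖ :=
                norm_sub_le_norm_sub_add_norm_sub _ _ _
            _ ≤ 3 * ε := by linarith
        have := norm_sub_norm_le (P (T y)) (T x0)
        have habs := abs_norm_sub_norm_le (P (T y)) (T x0)
        have : ‖T x0‖ - ‖P (T y)‖ ≤ 3 * ε := by
          have := abs_le.mp habs
          linarith [this.1]
        linarith [hTx0]
      have hTk_lb : 1 - 4 * ε ≤ ‖Tk‖ * (1 + ε) := by
        calc 1 - 4 * ε ≤ ‖P (T y)‖ := hPTy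
          _ = ‖Tk yk‖ := (hTk_norm yk).symm
          _ ≤ ‖Tk‖ * ‖yk‖ := Tk.le_opNorm yk
          _ ≤ ‖Tk‖ * (1 + ε) := mul_le_mul_of_nonneg_left hyn Tk.opNorm_nonneg
      have hTk_pos : 0 < ‖Tk‖ := by nlinarith [Tk.opNorm_nonneg]
      have key : ∀ (x : ↥(Zl k)) (f : ↥(Zl k) →L[ℝ] ℝ), ‖x‖ = 1 → ‖f‖ = 1 → f x = 1 →
          |f (Tk x)| ≤ vrad T := by
        intro x f hx hf hfx
        set g : Z →L[ℝ] ℝ := f.comp Pk with hgdef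
        have hPk_norm : ∀ w : Z, ‖Pk w‖ = ‖P w‖ := fun w => rfl
        have hgle : ‖g‖ ≤ 1 := by
          refine g.opNorm_le_bound zero_le_one (fun w => ?_)
          rw [one_mul]
          calc ‖g w‖ ≤ ‖f‖ * ‖Pk w‖ := f.le_opNorm _
            _ = ‖P w‖ := by rw [hf, one_mul, hPk_norm]
            _ ≤ ‖w‖ := hPle w
        have hPkx : Pk (x : Z) = x := Subtype.ext (by
          show P (x : Z) = (x : Z)
          exact hPfix _ x.2)
        have hgx : g (x : Z) = 1 := by
          rw [hgdef]
          simp only [ContinuousLinearMap.comp_apply, hPkx, hfx]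
        have hxZ : ‖(x : Z)‖ = 1 := hx
        have hgnorm : ‖g‖ = 1 := by
          refine le_antisymm hgle ?_
          have h := g.le_opNorm (x : Z)
          rw [hgx, hxZ, mul_one] at h
          simpa using h
        have hgT : g (T (x : Z)) = f (Tk x) := by rw [hgdef]; rfl
        rw [← hgT]
        exact le_vrad T hxZ hgnorm hgx
      have hvTk : vrad Tk ≤ vrad T := by
        apply Real.sSup_le
        · rintro r ⟨x, f, hx, hf, hfx, rfl⟩
          exact key x f hx hf hfx
        · exact hvT0
      have hnk : nindex ↥(Zl k) ≤ ‖Tk‖⁻¹ * vrad Tk :=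
        nindex_le_inv_norm_mul_vrad Tk hTk_pos
      have hcinv : ‖Tk‖⁻¹ ≤ (1 + ε) / (1 - 4 * ε) := by
        rw [inv_eq_one_div, div_le_div_iff₀ hTk_pos h14]
        nlinarith
      calc nindex ↥(Zl k) ≤ ‖Tk‖⁻¹ * vrad Tk := hnk
        _ ≤ ‖Tk‖⁻¹ * vrad T := mul_le_mul_of_nonneg_left hvTk (inv_nonneg.mpr hTk_pos.le)
        _ ≤ ((1 + ε) / (1 - 4 * ε)) * vrad T := mul_le_mul_of_nonneg_right hcinv hvT0
    have hbd : ((1 + ε) / (1 - 4 * ε)) * vrad T ≤ vrad T + η := by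
      rw [div_mul_eq_mul_div, div_le_iff₀ h14]
      nlinarith
    exact Filter.limsup_le_of_le hcb (hev.mono fun k hk => hk.trans hbd)
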